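/- Let g ≥ 3 and let α_{1,1},…,α_{1,g}, α_{2,1},…,α_{2,g} be 2g independent indeterminates. Let M_g be the determinant of the (2g−3)×(2g−3) matrix on the columns (1,i) (2≤i≤g) and (2,j) (3≤j≤g) of the stacked matrix Z of complete homogeneous symmetric polynomials q_h(α_{k,i},α_{k,j}). Then M_3 ≠ 0, and for g ≥ 4 the coefficient of α_{1,g}^{g−2} α_{2,g}^{g−3} in M_g equals (α_{2,2} − α_{2,1}) M_{g−1}; consequently M_g ≠ 0 for all g ≥ 3, and hence for a general choice of complex numbers α_{k,i} the linear system Q_{1,0}(s)=⋯=Q_{1,g−2}(s)=Q_{2,0}(s)=⋯=Q_{2,g−3}(s)=0 has rank exactly 2g−3 and solution space of dimension C(g,2) − (2g−3) = (g−2)(g−3)/2. -/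

import Mathlib

open MvPolynomial

/-- Complete homogeneous symmetric polynomial of degree `h` in two variables. -/
def qpoly {R : Type*} [CommRing R] (h : ℕ) (x y : R) : R :=
  ∑ m ∈ Finset.range (h + 1), x ^ m * y ^ (h - m)

/-- The indeterminate `α_{k,i}` over `ℂ` (`k ∈ {1,2}` as `Fin 2`, `i ∈ {1,…,g}` as
`0,…,g−1`). -/
noncomputable def av (k : Fin 2) (i : ℕ) : MvPolynomial (Fin 2 × ℕ) ℂ :=
  MvPolynomial.X (k, i)

/-- The `(2g−3)×(2g−3)` matrix on the columns `(1,i)` (`2≤i≤g`) and `(2,j)` (`3≤j≤g`)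
of the stacked matrix `Z` of complete homogeneous symmetric polynomials. -/
noncomputable def Nmat (g : ℕ) :
    Matrix (Fin (g - 1) ⊕ Fin (g - 2)) (Fin (g - 1) ⊕ Fin (g - 2))
      (MvPolynomial (Fin 2 × ℕ) ℂ) :=
  Matrix.of fun r c =>
    match r, c with
    | Sum.inl h, Sum.inl i => qpoly h.1 (av 0 0) (av 0 (i.1 + 1))
    | Sum.inl h, Sum.inr j => qpoly h.1 (av 0 1) (av 0 (j.1 + 2))
    | Sum.inr h, Sum.inl i => qpoly (h.1 + 1) (av 1 0) (av 1 (i.1 + 1))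
    | Sum.inr h, Sum.inr j => qpoly (h.1 + 1) (av 1 1) (av 1 (j.1 + 2))

/-- `M_g`, the determinant of the above minor. -/
noncomputable def Mdet (g : ℕ) : MvPolynomial (Fin 2 × ℕ) ℂ := (Nmat g).det

/-- The full `(2g−3) × C(g,2)` matrix `Z` with entries evaluated at complex numbers
`a k i` (rows: the coefficient vectors of `Q_{1,g−2},…,Q_{1,0}` then
`Q_{2,g−2},…,Q_{2,1}`, columns indexed by pairs `i < j`). -/
def Zev (g : ℕ) (a : Fin 2 → ℕ → ℂ) :
    Matrix (Fin (g - 1) ⊕ Fin (g - 2)) {p : Fin g × Fin g // p.1 < p.2} ℂ :=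
  Matrix.of fun r p =>
    match r with
    | Sum.inl h => qpoly h.1 (a 0 p.1.1.1) (a 0 p.1.2.1)
    | Sum.inr h => qpoly (h.1 + 1) (a 1 p.1.1.1) (a 1 p.1.2.1)

/-!
The variables `α_{1,g}, α_{2,g}` occur only in the two columns `(1,g)` and `(2,g)` of `N_g`,
and there the entry of a row of degree `h` is `q_h(α_{k,i}, α_{k,g}) = Σ_m α_{k,g}^m α_{k,i}^{h-m}`.
Expanding `M_g` bilinearly in these two columns, the monomial `α_{1,g}^{g-2} α_{2,g}^{g-3}` is
produced by exactly two pairs of coefficient vectors: the `α_{1,g}^{g-2}`-vector is the unit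
vector of the last row of the first block, the `α_{2,g}^{g-3}`-vector of column `(k,g)` is a unit
vector plus `α_{2,k}` times another one. Deleting two unit columns from `N_g` leaves `N_{g-1}`,
and the two determinants combine to `(α_{2,2} - α_{2,1}) M_{g-1}`.

Together with `M_3 ≠ 0` (evaluate at a point) this gives `M_g ≠ 0` by induction. At a point
where `M_g` does not vanish, `N_g` is an invertible `(2g-3)`-minor of `Z`, so `Z` has full row
rank `2g-3`, and rank–nullity gives the dimension of the solution space.
-/

namespace Matrix

variable {R : Type*} [CommRing R] {n : Type*} [Fintype n] [DecidableEq n]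

theorem det_mem {S : Type*} [SetLike S R] [SubringClass S R] {s : S} (M : Matrix n n R)
    (hM : ∀ i j, M i j ∈ s) : M.det ∈ s := by
  rw [det_apply]
  exact sum_mem fun p _ => zsmul_mem (prod_mem fun i _ => hM _ _) _

theorem det_updateCol_finsetSum_smul {ι : Type*} (M : Matrix n n R) (c : n) (s : Finset ι)
    (a : ι → R) (v : ι → n → R) :
    (M.updateCol c (∑ i ∈ s, a i • v i)).det = ∑ i ∈ s, a i * (M.updateCol c (v i)).det := by
  classical
  induction s using Finset.induction_on with
  | empty => simpa using det_updateCol_smul M c 0 0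
  | insert i s hi ih =>
    rw [Finset.sum_insert hi, det_updateCol_add, det_updateCol_smul, ih, Finset.sum_insert hi]

theorem det_updateCol_updateCol_finsetSum_smul {ι κ : Type*} (M : Matrix n n R) {c₁ c₂ : n}
    (hc : c₁ ≠ c₂) (s : Finset ι) (t : Finset κ) (a : ι → R) (b : κ → R) (v : ι → n → R)
    (w : κ → n → R) :
    ((M.updateCol c₁ (∑ i ∈ s, a i • v i)).updateCol c₂ (∑ j ∈ t, b j • w j)).det =
      ∑ i ∈ s, ∑ j ∈ t, a i * b j * ((M.updateCol c₁ (v i)).updateCol c₂ (w j)).det := by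
  rw [det_updateCol_finsetSum_smul, Finset.sum_comm]
  refine Finset.sum_congr rfl fun j _ => ?_
  rw [updateCol_comm _ hc, det_updateCol_finsetSum_smul, Finset.mul_sum]
  refine Finset.sum_congr rfl fun i _ => ?_
  rw [updateCol_comm _ hc.symm]
  ring

theorem det_updateCol_updateCol_swap (M : Matrix n n R) {c₁ c₂ : n} (hc : c₁ ≠ c₂)
    (u v : n → R) :
    ((M.updateCol c₁ u).updateCol c₂ v).det = -((M.updateCol c₁ v).updateCol c₂ u).det := by
  have hswap : (M.updateCol c₁ u).updateCol c₂ v =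
      ((M.updateCol c₁ v).updateCol c₂ u).submatrix id (Equiv.swap c₁ c₂) := by
    ext r c
    simp only [submatrix_apply, id, updateCol_apply, Equiv.swap_apply_def]
    split_ifs <;> simp_all
  rw [hswap, det_permute', Equiv.Perm.sign_swap hc]
  simp

theorem det_eq_det_submatrix_of_col_eq_single {κ τ : Type*} [Fintype κ] [DecidableEq κ]
    [Fintype τ] [DecidableEq τ] (e : κ ⊕ τ ≃ n) (M : Matrix n n R)
    (hM : ∀ t r, M r (e (.inr t)) = (Pi.single (e (.inr t)) 1 : n → R) r) :
    M.det = (M.submatrix (e ∘ .inl) (e ∘ .inl)).det := by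
  have h₁₂ : (M.submatrix e e).toBlocks₁₂ = 0 := by
    ext k t
    simp [toBlocks₁₂, hM]
  have h₂₂ : (M.submatrix e e).toBlocks₂₂ = 1 := by
    ext t t'
    simp [toBlocks₂₂, hM, Pi.single_apply, one_apply]
  rw [← det_submatrix_equiv_self e, ← fromBlocks_toBlocks (M.submatrix e e), h₁₂, h₂₂,
    det_fromBlocks_zero₁₂, det_one, mul_one]
  rfl

end Matrix

namespace MvPolynomial

variable {σ R : Type*} [CommRing R]

theorem eq_zero_of_mem_support_of_mem_supported {s : Set σ} {p : MvPolynomial σ R}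
    (hp : p ∈ supported R s) {e : σ →₀ ℕ} (he : e ∈ p.support) {v : σ} (hv : v ∉ s) :
    e v = 0 := by
  by_contra hne
  exact hv (mem_supported.1 hp
    ((mem_vars_iff_mem_support v).2 ⟨e, he, Finsupp.mem_support_iff.2 hne⟩))

theorem coeff_add_monomial_mul_of_mem_supported [DecidableEq σ] {s : Set σ}
    {D : MvPolynomial σ R} (hD : D ∈ supported R s) {d e e' : σ →₀ ℕ} (hd : ∀ v ∉ s, d v = 0)
    (he : ∀ v ∈ s, e v = 0) (he' : ∀ v ∈ s, e' v = 0) :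
    coeff (d + e) (monomial e' 1 * D) = if e' = e then coeff d D else 0 := by
  rw [coeff_monomial_mul', one_mul]
  by_cases heq : e' = e
  · simp [heq]
  rw [if_neg heq]
  split_ifs with hle
  · obtain ⟨v, hv⟩ : ∃ v, e' v ≠ e v := by
      by_contra! h
      exact heq (Finsupp.ext h)
    have hvs : v ∉ s := fun hvs => hv (by rw [he v hvs, he' v hvs])
    have hlt : e' v < e v := by
      have := hle v
      simp only [Finsupp.add_apply, hd v hvs, zero_add] at this
      omega
    -- the monomial `d + e - e'` involves `v ∉ s`, which `D` does not
    by_contra hne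
    have := eq_zero_of_mem_support_of_mem_supported hD (mem_support_iff.2 hne) hvs
    simp only [Finsupp.tsub_apply, Finsupp.add_apply, hd v hvs, zero_add] at this
    omega
  · rfl

end MvPolynomial

section Qpoly

variable {R : Type*} [CommRing R]

theorem qpoly_comm (h : ℕ) (x y : R) : qpoly h x y = qpoly h y x := by
  unfold qpoly
  rw [← Finset.sum_range_reflect]
  refine Finset.sum_congr rfl fun m hm => ?_
  rw [Finset.mem_range] at hm
  rw [show h + 1 - 1 - m = h - m by omega, show h - (h - m) = m by omega, mul_comm]

theorem qpoly_eq_sum_range {h L : ℕ} (hh : h < L) (x y : R) :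
    qpoly h x y = ∑ m ∈ Finset.range L, y ^ m * if m ≤ h then x ^ (h - m) else 0 := by
  rw [qpoly_comm, qpoly, ← Finset.sum_range_add_sum_Ico _ (show h + 1 ≤ L by omega),
    Finset.sum_eq_zero (s := Finset.Ico _ _) fun m hm => ?_, add_zero]
  · exact Finset.sum_congr rfl fun m hm => by
      rw [if_pos (Nat.lt_succ_iff.1 (Finset.mem_range.1 hm))]
  · rw [if_neg (by rw [Finset.mem_Ico] at hm; omega), mul_zero]

theorem map_qpoly {S : Type*} [CommRing S] (f : R →+* S) (h : ℕ) (x y : R) :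
    f (qpoly h x y) = qpoly h (f x) (f y) := by
  simp [qpoly]

theorem qpoly_mem {S : Type*} [SetLike S R] [SubsemiringClass S R] {s : S} (h : ℕ) {x y : R}
    (hx : x ∈ s) (hy : y ∈ s) : qpoly h x y ∈ s :=
  sum_mem fun m _ => mul_mem (pow_mem hx m) (pow_mem hy (h - m))

end Qpoly

section Indexing

variable {p q : ℕ}

-- Row `r` of `N_g` consists of `q_{rowDegree r}` in the variables `α_{rowBlock r + 1, ·}`, and
-- column `c` is the pair `colPair c` (all indices shifted down by one).
def rowBlock : Fin p ⊕ Fin q → Fin 2 := Sum.elim (fun _ => 0) (fun _ => 1)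

def rowDegree : Fin p ⊕ Fin q → ℕ := Sum.elim (fun h => h) (fun h => h + 1)

def colPair : Fin p ⊕ Fin q → ℕ × ℕ := Sum.elim (fun i => (0, i + 1)) (fun j => (1, j + 2))

/-- The coefficient vector of `α_{k,j}^m` in a column `(i,j)` of `N_g`, where `x k = α_{k,i}`. -/
def colCoeff {R : Type*} [CommRing R] (x : Fin 2 → R) (k : Fin 2) (m : ℕ) :
    Fin p ⊕ Fin q → R :=
  fun r => if rowBlock r = k ∧ m ≤ rowDegree r then x k ^ (rowDegree r - m) else 0

theorem colCoeff_mem {R S : Type*} [CommRing R] [SetLike S R] [SubsemiringClass S R] {s : S}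
    {x : Fin 2 → R} (hx : ∀ k, x k ∈ s) (k : Fin 2) (m : ℕ) (r : Fin p ⊕ Fin q) :
    colCoeff x k m r ∈ s := by
  unfold colCoeff
  split_ifs
  exacts [pow_mem (hx k) _, zero_mem _]

end Indexing

theorem Nmat_apply (g : ℕ) (r c : Fin (g - 1) ⊕ Fin (g - 2)) :
    Nmat g r c = qpoly (rowDegree r) (av (rowBlock r) (colPair c).1)
      (av (rowBlock r) (colPair c).2) := by
  rcases r with h | h <;> rcases c with i | j <;> rfl

theorem Zev_apply (g : ℕ) (a : Fin 2 → ℕ → ℂ) (r : Fin (g - 1) ⊕ Fin (g - 2))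
    (p : {p : Fin g × Fin g // p.1 < p.2}) :
    Zev g a r p = qpoly (rowDegree r) (a (rowBlock r) p.1.1) (a (rowBlock r) p.1.2) := by
  rcases r with h | h <;> rfl

theorem rowDegree_lt {g : ℕ} (r : Fin (g - 1) ⊕ Fin (g - 2)) : rowDegree r < g - 1 := by
  rcases r with h | h <;> simp only [rowDegree, Sum.elim_inl, Sum.elim_inr] <;> omega

theorem colPair_lt {g : ℕ} (c : Fin (g - 1) ⊕ Fin (g - 2)) :
    (colPair c).1 < (colPair c).2 ∧ (colPair c).2 < g := by
  rcases c with i | j <;> simp only [colPair, Sum.elim_inl, Sum.elim_inr] <;> omega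

theorem Mdet_mem_supported (g : ℕ) : Mdet g ∈ supported ℂ {v | v.2 < g} :=
  Matrix.det_mem _ fun r c => by
    rw [Nmat_apply]
    exact qpoly_mem _ (X_mem_supported.2 ((colPair_lt c).1.trans (colPair_lt c).2))
      (X_mem_supported.2 (colPair_lt c).2)

theorem Nmat_col_eq_sum (g : ℕ) (c : Fin (g - 1) ⊕ Fin (g - 2)) :
    (fun r => Nmat g r c) = ∑ km ∈ Finset.univ ×ˢ Finset.range (g - 1),
      monomial (Finsupp.single (km.1, (colPair c).2) km.2) (1 : ℂ) •
        colCoeff (fun k => av k (colPair c).1) km.1 km.2 := by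
  ext r
  rw [Nmat_apply, qpoly_eq_sum_range (rowDegree_lt r), Finset.sum_apply, Finset.sum_product,
    Finset.sum_eq_single (rowBlock r) (fun k _ hk => ?_) (by simp)]
  · simp [colCoeff, av, X_pow_eq_monomial]
  · simp [colCoeff, Ne.symm hk]

section Recursion

-- With `g = n + 4`, `Fin (g - 1)` and `Fin (g - 2)` are definitionally `Fin (n + 3)` and
-- `Fin (n + 2)`; `colLast₁`, `colLast₂` are the columns `(1,g)` and `(2,g)`.

variable (n : ℕ)

def colLast₁ : Fin (n + 4 - 1) ⊕ Fin (n + 4 - 2) := .inl (Fin.last (n + 2))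

def colLast₂ : Fin (n + 4 - 1) ⊕ Fin (n + 4 - 2) := .inr (Fin.last (n + 1))

theorem colLast₁_ne_colLast₂ : colLast₁ n ≠ colLast₂ n := Sum.inl_ne_inr

theorem colPair_colLast₁ : colPair (colLast₁ n) = (0, n + 3) := rfl

theorem colPair_colLast₂ : colPair (colLast₂ n) = (1, n + 3) := rfl

theorem det_updateCol_colLast_mem_supported {u w : Fin (n + 4 - 1) ⊕ Fin (n + 4 - 2) →
      MvPolynomial (Fin 2 × ℕ) ℂ}
    (hu : ∀ r, u r ∈ supported ℂ {x | x.2 ≠ n + 3})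
    (hw : ∀ r, w r ∈ supported ℂ {x | x.2 ≠ n + 3}) :
    (((Nmat (n + 4)).updateCol (colLast₁ n) u).updateCol (colLast₂ n) w).det ∈
      supported ℂ {x | x.2 ≠ n + 3} := by
  refine Matrix.det_mem _ fun r c => ?_
  simp only [Matrix.updateCol_apply]
  split_ifs with h₂ h₁
  · exact hw r
  · exact hu r
  · have hc : (colPair c).2 ≠ n + 3 := by
      rcases c with i | j <;> simp only [colPair, Sum.elim_inl, Sum.elim_inr] <;> intro h
      · exact h₁ (congrArg Sum.inl (Fin.ext (by rw [Fin.val_last]; omega)))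
      · exact h₂ (congrArg Sum.inr (Fin.ext (by rw [Fin.val_last]; omega)))
    rw [Nmat_apply]
    exact qpoly_mem _ (X_mem_supported.2 (show (colPair c).1 ≠ n + 3 by
      have := colPair_lt c; omega)) (X_mem_supported.2 hc)

theorem single_add_single_eq_single_add_single_iff {N p q m m' : ℕ} {k k' : Fin 2}
    (hp : p ≠ 0) (hq : q ≠ 0) :
    Finsupp.single (k, N) m + Finsupp.single (k', N) m' =
        Finsupp.single (0, N) p + Finsupp.single (1, N) q ↔
      (k, m) = (0, p) ∧ (k', m') = (1, q) ∨ (k, m) = (1, q) ∧ (k', m') = (0, p) := by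
  constructor
  · intro h
    have h₀ := DFunLike.congr_fun h (0, N)
    have h₁ := DFunLike.congr_fun h (1, N)
    fin_cases k <;> fin_cases k' <;> simp at h₀ h₁ ⊢ <;> omega
  · rintro (⟨h, h'⟩ | ⟨h, h'⟩) <;> simp only [Prod.mk.injEq] at h h' <;> simp [h, h', add_comm]

theorem coeff_monomial_mul_det_colCoeff (d : (Fin 2 × ℕ) →₀ ℕ) (hd₀ : d (0, n + 3) = 0)
    (hd₁ : d (1, n + 3) = 0) (k k' : Fin 2) (m m' : ℕ) :
    coeff (d + Finsupp.single (0, n + 3) (n + 2) + Finsupp.single (1, n + 3) (n + 1))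
        (monomial (Finsupp.single (k, n + 3) m + Finsupp.single (k', n + 3) m') 1 *
          (((Nmat (n + 4)).updateCol (colLast₁ n) (colCoeff (av · 0) k m)).updateCol
            (colLast₂ n) (colCoeff (av · 1) k' m')).det) =
      if (k, m) = (0, n + 2) ∧ (k', m') = (1, n + 1) ∨ (k, m) = (1, n + 1) ∧ (k', m') = (0, n + 2)
      then coeff d (((Nmat (n + 4)).updateCol (colLast₁ n) (colCoeff (av · 0) k m)).updateCol
        (colLast₂ n) (colCoeff (av · 1) k' m')).det
      else 0 := by
  classical
  have hx : ∀ i, i ≠ n + 3 → ∀ k, av k i ∈ supported ℂ {x | x.2 ≠ n + 3} :=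
    fun i hi _ => X_mem_supported.2 hi
  rw [add_assoc, coeff_add_monomial_mul_of_mem_supported (det_updateCol_colLast_mem_supported n
    (colCoeff_mem (hx 0 (by omega)) k m) (colCoeff_mem (hx 1 (by omega)) k' m')) ?_ ?_ ?_]
  · exact if_congr (single_add_single_eq_single_add_single_iff (by omega) (by omega)) rfl rfl
  · rintro ⟨k, i⟩ hi
    fin_cases k <;> simp_all
  all_goals
    rintro ⟨k, i⟩ hi
    simp_all

theorem coeff_Mdet_eq_coeff_det_add (d : (Fin 2 × ℕ) →₀ ℕ) (hd₀ : d (0, n + 3) = 0)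
    (hd₁ : d (1, n + 3) = 0) :
    coeff (d + Finsupp.single (0, n + 3) (n + 2) + Finsupp.single (1, n + 3) (n + 1))
        (Mdet (n + 4)) =
      coeff d ((((Nmat (n + 4)).updateCol (colLast₁ n) (colCoeff (av · 0) 0 (n + 2))).updateCol
          (colLast₂ n) (colCoeff (av · 1) 1 (n + 1))).det +
        (((Nmat (n + 4)).updateCol (colLast₁ n) (colCoeff (av · 0) 1 (n + 1))).updateCol
          (colLast₂ n) (colCoeff (av · 1) 0 (n + 2))).det) := by
  have hMdet : Mdet (n + 4) = (((Nmat (n + 4)).updateCol (colLast₁ n)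
      (fun r => Nmat (n + 4) r (colLast₁ n))).updateCol (colLast₂ n)
      (fun r => Nmat (n + 4) r (colLast₂ n))).det := by
    simp only [Matrix.updateCol_eq_self]; rfl
  rw [hMdet, Nmat_col_eq_sum, Nmat_col_eq_sum,
    Matrix.det_updateCol_updateCol_finsetSum_smul _ (colLast₁_ne_colLast₂ n)]
  simp only [colPair_colLast₁, colPair_colLast₂, monomial_mul, one_mul, coeff_sum]
  rw [← Finset.sum_product', Finset.sum_eq_add_of_mem ((0, n + 2), (1, n + 1))
    ((1, n + 1), (0, n + 2)) (by simp) (by simp) (by simp) fun x _ hx => ?_,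
    coeff_monomial_mul_det_colCoeff n d hd₀ hd₁, coeff_monomial_mul_det_colCoeff n d hd₀ hd₁,
    if_pos (by simp), if_pos (by simp), coeff_add]
  rw [coeff_monomial_mul_det_colCoeff n d hd₀ hd₁, if_neg]
  rintro (⟨h₁, h₂⟩ | ⟨h₁, h₂⟩)
  exacts [hx.1 (Prod.ext h₁ h₂), hx.2 (Prod.ext h₁ h₂)]

theorem colCoeff_zero_eq_single {R : Type*} [CommRing R] (x : Fin 2 → R) :
    (colCoeff x 0 (n + 2) : Fin (n + 4 - 1) ⊕ Fin (n + 4 - 2) → R) =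
      Pi.single (colLast₁ n) 1 := by
  ext (h | h)
  · have := h.isLt
    simp only [colCoeff, rowBlock, rowDegree, colLast₁, Pi.single_apply, Sum.inl.injEq,
      Fin.ext_iff, Fin.val_last, Sum.elim_inl, true_and]
    split_ifs <;> first | omega | simp [show (h : ℕ) - (n + 2) = 0 by omega]
  · simp [colCoeff, rowBlock, colLast₁]

theorem colCoeff_one_eq_single_add {R : Type*} [CommRing R] (x : Fin 2 → R) :
    (colCoeff x 1 (n + 1) : Fin (n + 4 - 1) ⊕ Fin (n + 4 - 2) → R) =
      Pi.single (.inr (Fin.castSucc (Fin.last n))) 1 + x 1 • Pi.single (colLast₂ n) 1 := by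
  ext (h | h)
  · simp [colCoeff, rowBlock, colLast₂]
  · have := h.isLt
    simp only [colCoeff, rowBlock, rowDegree, colLast₂, Pi.single_apply, Sum.inr.injEq,
      Fin.ext_iff, Fin.val_last, Fin.val_castSucc, Sum.elim_inr, true_and, Pi.add_apply,
      Pi.smul_apply, smul_eq_mul]
    obtain hh | hh | hh : (h : ℕ) = n ∨ (h : ℕ) = n + 1 ∨ (h : ℕ) < n := by omega
    · simp [hh]
    · simp [hh]
    · simp [hh.ne, (hh.trans (Nat.lt_succ_self n)).ne, Nat.not_le.2 hh]

theorem det_Nmat_updateCol_single :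
    (((Nmat (n + 4)).updateCol (colLast₁ n) (Pi.single (colLast₁ n) 1)).updateCol (colLast₂ n)
      (Pi.single (colLast₂ n) 1)).det = Mdet (n + 3) := by
  let e : (Fin (n + 2) ⊕ Fin (n + 1)) ⊕ (Fin 1 ⊕ Fin 1) ≃ Fin (n + 4 - 1) ⊕ Fin (n + 4 - 2) :=
    (Equiv.sumSumSumComm _ _ _ _).trans (Equiv.sumCongr finSumFinEquiv finSumFinEquiv)
  have he₁ : ∀ i, e (.inl (.inl i)) = .inl i.castSucc := fun _ => rfl
  have he₂ : ∀ j, e (.inl (.inr j)) = .inr j.castSucc := fun _ => rfl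
  have he₃ : e (.inr (.inl 0)) = colLast₁ n := rfl
  have he₄ : e (.inr (.inr 0)) = colLast₂ n := rfl
  rw [Matrix.det_eq_det_submatrix_of_col_eq_single e]
  · congr 1
    refine Matrix.ext fun r c => ?_
    rcases r with r | r <;> rcases c with c | c <;>
      simp [he₁, he₂, colLast₁, colLast₂, Matrix.updateCol_apply, Fin.ext_iff, Nmat_apply,
        rowDegree, rowBlock, colPair] <;> omega
  · rintro (t | t) r <;> rw [Fin.fin_one_eq_zero t]
    · rw [he₃]
      simp [colLast₁, colLast₂]
    · rw [he₄]
      simp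

theorem det_colCoeff_add_det_colCoeff :
    (((Nmat (n + 4)).updateCol (colLast₁ n) (colCoeff (av · 0) 0 (n + 2))).updateCol
          (colLast₂ n) (colCoeff (av · 1) 1 (n + 1))).det +
        (((Nmat (n + 4)).updateCol (colLast₁ n) (colCoeff (av · 0) 1 (n + 1))).updateCol
          (colLast₂ n) (colCoeff (av · 1) 0 (n + 2))).det =
      (av 1 1 - av 1 0) * Mdet (n + 3) := by
  rw [colCoeff_zero_eq_single, colCoeff_zero_eq_single, colCoeff_one_eq_single_add,
    colCoeff_one_eq_single_add,
    Matrix.det_updateCol_updateCol_swap _ (colLast₁_ne_colLast₂ n) (_ + _),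
    Matrix.det_updateCol_add, Matrix.det_updateCol_add, Matrix.det_updateCol_smul,
    Matrix.det_updateCol_smul, det_Nmat_updateCol_single]
  ring

end Recursion

theorem coeff_Mdet (g : ℕ) (hg : 4 ≤ g) (d : (Fin 2 × ℕ) →₀ ℕ) (hd₀ : d (0, g - 1) = 0)
    (hd₁ : d (1, g - 1) = 0) :
    coeff (d + Finsupp.single (0, g - 1) (g - 2) + Finsupp.single (1, g - 1) (g - 3)) (Mdet g) =
      coeff d ((av 1 1 - av 1 0) * Mdet (g - 1)) := by
  obtain ⟨n, rfl⟩ : ∃ n, g = n + 4 := ⟨g - 4, by omega⟩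
  exact (coeff_Mdet_eq_coeff_det_add n d hd₀ hd₁).trans
    (congrArg (coeff d) (det_colCoeff_add_det_colCoeff n))

-- At `α_{1,·} = (0,1,2)`, `α_{2,·} = (0,0,1)` the matrix is `!![1,1,1; 1,2,3; 0,1,1]`.
theorem Mdet_three_ne_zero : Mdet 3 ≠ 0 := by
  intro h
  have := congrArg (eval fun v => if v.1 = 0 then (v.2 : ℂ) else if v.2 = 2 then 1 else 0) h
  have h₀ : finSumFinEquiv.symm (0 : Fin (2 + 1)) = .inl 0 := rfl
  have h₁ : finSumFinEquiv.symm (1 : Fin (2 + 1)) = .inl 1 := rfl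
  have h₂ : finSumFinEquiv.symm (2 : Fin (2 + 1)) = .inr 0 := rfl
  rw [Mdet, RingHom.map_det, ← Matrix.det_reindex_self finSumFinEquiv, Matrix.det_fin_three]
    at this
  simp only [Matrix.reindex_apply, Matrix.submatrix_apply, h₀, h₁, h₂, RingHom.mapMatrix_apply,
    Matrix.map_apply] at this
  simp [Nmat, qpoly, Finset.sum_range_succ, av] at this

theorem Mdet_ne_zero {g : ℕ} (hg : 3 ≤ g) : Mdet g ≠ 0 := by
  induction g, hg using Nat.le_induction with
  | base => exact Mdet_three_ne_zero
  | succ g hg ih =>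
    have hX : (av 1 1 - av 1 0 : MvPolynomial (Fin 2 × ℕ) ℂ) ≠ 0 :=
      sub_ne_zero.2 ((X_injective (σ := Fin 2 × ℕ) (R := ℂ)).ne (by simp))
    obtain ⟨d, hd⟩ := exists_coeff_ne_zero (mul_ne_zero hX ih)
    have hmem : (av 1 1 - av 1 0) * Mdet g ∈ supported ℂ {v : Fin 2 × ℕ | v.2 < g} :=
      mul_mem (sub_mem (X_mem_supported.2 (show 1 < g by omega))
        (X_mem_supported.2 (show 0 < g by omega))) (Mdet_mem_supported g)
    have hd₀ := eq_zero_of_mem_support_of_mem_supported hmem (mem_support_iff.2 hd)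
      (v := (0, g)) (by simp)
    have hd₁ := eq_zero_of_mem_support_of_mem_supported hmem (mem_support_iff.2 hd)
      (v := (1, g)) (by simp)
    intro h
    have := coeff_Mdet (g + 1) (by omega) d hd₀ hd₁
    rw [h, coeff_zero] at this
    exact hd this.symm

theorem card_pairs_lt (g : ℕ) : Fintype.card {p : Fin g × Fin g // p.1 < p.2} = g.choose 2 := by
  rw [Fintype.card_subtype, Fintype.card_product_filter_lt, Fintype.card_fin]

theorem choose_two_eq_add {g : ℕ} (hg : 3 ≤ g) :
    g.choose 2 = (2 * g - 3) + (g - 2) * (g - 3) / 2 := by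
  obtain ⟨k, rfl⟩ : ∃ k, g = k + 3 := ⟨g - 3, by omega⟩
  rw [Nat.choose_two_right, show (k + 3) * (k + 3 - 1) = (k + 1) * k + (2 * k + 3) * 2 by
    rw [show k + 3 - 1 = k + 2 by omega]; ring, Nat.add_mul_div_right _ _ two_pos,
    show k + 3 - 2 = k + 1 by omega, show k + 3 - 3 = k by omega]
  omega

theorem exists_Zev_rank_eq_and_finrank_ker_eq {g : ℕ} (hg : 3 ≤ g) : ∃ a : Fin 2 → ℕ → ℂ,
    (Zev g a).rank = 2 * g - 3 ∧
      Module.finrank ℂ (LinearMap.ker (Zev g a).mulVecLin) = (g - 2) * (g - 3) / 2 := by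
  obtain ⟨f, hf⟩ : ∃ f, eval f (Mdet g) ≠ 0 := by
    by_contra! h
    exact Mdet_ne_zero hg (MvPolynomial.funext fun x => by simp [h x])
  set Z := Zev g fun k i => f (k, i)
  let col : Fin (g - 1) ⊕ Fin (g - 2) → {p : Fin g × Fin g // p.1 < p.2} := fun c =>
    ⟨(⟨(colPair c).1, (colPair_lt c).1.trans (colPair_lt c).2⟩, ⟨(colPair c).2, (colPair_lt c).2⟩),
      Fin.mk_lt_mk.2 (colPair_lt c).1⟩
  have hminor : Z.submatrix id col = (Nmat g).map (eval f) := by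
    ext r c
    simp [Z, col, Zev_apply, Nmat_apply, map_qpoly, av]
  have hle : 2 * g - 3 ≤ Z.rank :=
    calc 2 * g - 3 = ((Nmat g).map (eval f)).rank := by
          rw [Matrix.rank_of_det_ne_zero, Fintype.card_sum, Fintype.card_fin, Fintype.card_fin]
          · omega
          · rwa [← RingHom.mapMatrix_apply, ← RingHom.map_det]
      _ ≤ Z.rank := hminor ▸ Matrix.rank_submatrix_le _ _ _
  have hrank : Z.rank = 2 * g - 3 := by
    refine le_antisymm ?_ hle
    have := Z.rank_le_card_height
    rw [Fintype.card_sum, Fintype.card_fin, Fintype.card_fin] at this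
    omega
  refine ⟨_, hrank, ?_⟩
  change Module.finrank ℂ (LinearMap.ker Z.mulVecLin) = _
  have := LinearMap.finrank_range_add_finrank_ker Z.mulVecLin
  rw [Module.finrank_fintype_fun_eq_card, card_pairs_lt, choose_two_eq_add hg] at this
  change Z.rank + _ = _ at this
  omega

/-- `M_3 ≠ 0`; for `g ≥ 4` the coefficient of `α_{1,g}^{g−2} α_{2,g}^{g−3}`
in `M_g` equals `(α_{2,2} − α_{2,1}) M_{g−1}` (stated coefficientwise); consequently
`M_g ≠ 0` for all `g ≥ 3`; hence for a general (here: some) choice of complex numbers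
`α_{k,i}` the linear system `Q_{1,0} = ⋯ = Q_{1,g−2} = Q_{2,0} = ⋯ = Q_{2,g−3} = 0` has
rank exactly `2g−3` and solution space of dimension `C(g,2) − (2g−3) = (g−2)(g−3)/2`. -/
theorem Mdet_ne_zero_and_rank :
    Mdet 3 ≠ 0 ∧
    (∀ g : ℕ, 4 ≤ g →
      ∀ d : (Fin 2 × ℕ) →₀ ℕ, d ((0 : Fin 2), g - 1) = 0 → d ((1 : Fin 2), g - 1) = 0 →
        MvPolynomial.coeff
            (d + Finsupp.single ((0 : Fin 2), g - 1) (g - 2) +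
              Finsupp.single ((1 : Fin 2), g - 1) (g - 3)) (Mdet g) =
          MvPolynomial.coeff d ((av 1 1 - av 1 0) * Mdet (g - 1))) ∧
    (∀ g : ℕ, 3 ≤ g → Mdet g ≠ 0) ∧
    (∀ g : ℕ, 3 ≤ g → ∃ a : Fin 2 → ℕ → ℂ,
      (Zev g a).rank = 2 * g - 3 ∧
      Module.finrank ℂ (LinearMap.ker (Zev g a).mulVecLin) = (g - 2) * (g - 3) / 2) :=
  ⟨Mdet_three_ne_zero, coeff_Mdet, fun _ => Mdet_ne_zero,
    fun _ => exists_Zev_rank_eq_and_finrank_ker_eq⟩
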